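/- Let D be a PVMD and I a packet of D, i.e., a t-invertible integral t-ideal whose radical P = √I is a prime ideal. If P has height one, then ⋂_{n≥1}(I^n)_v = (0). -/

import Mathlib

open scoped nonZeroDivisors

variable (D : Type*) [CommRing D] [IsDomain D]
variable (K : Type*) [Field K] [Algebra D K] [IsFractionRing D K]

/-- The `v`-operation: `I_v = (I⁻¹)⁻¹`, viewed as a `D`-submodule of `K`. -/
noncomputable def vSub (I : FractionalIdeal D⁰ K) : Submodule D K :=
  (((I⁻¹)⁻¹ : FractionalIdeal D⁰ K) : Submodule D K)

/-- The `t`-operation: `I_t = ⋃ {J_v : J ⊆ I nonzero finitely generated}`. -/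
noncomputable def tSub (I : FractionalIdeal D⁰ K) : Submodule D K :=
  ⨆ J : {J : FractionalIdeal D⁰ K // J ≠ 0 ∧ (J : Submodule D K).FG ∧ J ≤ I}, vSub D K J.1

/-- A fractional ideal `I` is `t`-invertible if `(I * I⁻¹)_t = D`. -/
noncomputable def IsTInvertible (I : FractionalIdeal D⁰ K) : Prop :=
  tSub D K (I * I⁻¹) = ((1 : FractionalIdeal D⁰ K) : Submodule D K)

/-- An integral ideal `I` of `D` is a `t`-ideal if `I_t = I`. -/
noncomputable def IsTIdeal (I : Ideal D) : Prop :=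
  tSub D K (I : FractionalIdeal D⁰ K) = ((I : FractionalIdeal D⁰ K) : Submodule D K)

/-- `D` is a PVMD: every nonzero finitely generated integral ideal is `t`-invertible. -/
noncomputable def IsPVMD : Prop :=
  ∀ I : Ideal D, I ≠ ⊥ → I.FG → IsTInvertible D K (I : FractionalIdeal D⁰ K)

/-!
Put `P = √I`. Since `(II⁻¹)_t = D` and no ideal of `t`-closure `D` lies in the radical of the
proper `t`-ideal `I`, there are `a ∈ I` and `b ∈ I⁻¹` with `u = ab ∈ D \ P`. The PVMD hypothesis
makes `D_P` a valuation ring, so `Q = ⋂ₘ aᵐ D_P ∩ D` is a prime ideal; it lies in `P` and misses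
`a`, so `Q = 0` because `P` has height one. If `z ∈ ⋂ₙ (Iⁿ)_v` then `zbⁿ ∈ D` for all `n`, and
`y = zb` satisfies `y uᵐ = aᵐ (z b^{m+1})`, so `y ∈ Q = 0` and `z = 0`.
-/

namespace FractionalIdeal

variable {D K}

instance : NoZeroDivisors (FractionalIdeal D⁰ K) where
  eq_zero_or_eq_zero_of_mul_eq_zero {A B} hAB := by
    by_contra! h
    obtain ⟨a, ha, ha0⟩ := (Submodule.ne_bot_iff _).mp (coeToSubmodule_ne_bot.mpr h.1)
    obtain ⟨b, hb, hb0⟩ := (Submodule.ne_bot_iff _).mp (coeToSubmodule_ne_bot.mpr h.2)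
    have hab : a * b ∈ A * B := mul_mem_mul ha hb
    rw [hAB, mem_zero_iff] at hab
    exact mul_ne_zero ha0 hb0 hab

theorem inv_ne_zero {J : FractionalIdeal D⁰ K} (hJ : J ≠ 0) : J⁻¹ ≠ 0 := by
  intro h
  have hden := den_mem_inv hJ
  rw [h, mem_zero_iff, IsFractionRing.to_map_eq_zero_iff] at hden
  exact nonZeroDivisors.coe_ne_zero _ hden

theorem mul_inv_le_one (J : FractionalIdeal D⁰ K) : J * J⁻¹ ≤ 1 :=
  mul_one_div_le_one

theorem le_inv_iff_mul_le {A J : FractionalIdeal D⁰ K} (hJ : J ≠ 0) : A ≤ J⁻¹ ↔ A * J ≤ 1 :=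
  le_div_iff_mul_le hJ

theorem inv_inv_mul_inv_inv_le {A B : FractionalIdeal D⁰ K} (hA : A ≠ 0) (hB : B ≠ 0) :
    A⁻¹⁻¹ * B⁻¹⁻¹ ≤ (A * B)⁻¹⁻¹ := by
  have hAB : (A * B)⁻¹ * A ≤ B⁻¹ := by
    rw [le_inv_iff_mul_le hB, mul_assoc, mul_comm]; exact mul_inv_le_one _
  have hB' : (A * B)⁻¹ * B⁻¹⁻¹ ≤ A⁻¹ := by
    rw [le_inv_iff_mul_le hA]
    calc (A * B)⁻¹ * B⁻¹⁻¹ * A = (A * B)⁻¹ * A * B⁻¹⁻¹ := mul_right_comm _ _ _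
      _ ≤ B⁻¹ * B⁻¹⁻¹ := by gcongr
      _ ≤ 1 := mul_inv_le_one _
  rw [le_inv_iff_mul_le (inv_ne_zero (mul_ne_zero hA hB))]
  calc A⁻¹⁻¹ * B⁻¹⁻¹ * (A * B)⁻¹ = A⁻¹⁻¹ * ((A * B)⁻¹ * B⁻¹⁻¹) := by ring
    _ ≤ A⁻¹⁻¹ * A⁻¹ := by gcongr
    _ ≤ 1 := by rw [mul_comm]; exact mul_inv_le_one _

theorem inv_inv_pow_le {A : FractionalIdeal D⁰ K} (hA : A ≠ 0) (n : ℕ) :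
    A⁻¹⁻¹ ^ n ≤ (A ^ n)⁻¹⁻¹ := by
  induction n with
  | zero => simp
  | succ n ih =>
    calc A⁻¹⁻¹ ^ (n + 1) = A⁻¹⁻¹ ^ n * A⁻¹⁻¹ := pow_succ _ _
      _ ≤ (A ^ n)⁻¹⁻¹ * A⁻¹⁻¹ := by gcongr
      _ ≤ (A ^ (n + 1))⁻¹⁻¹ := by
        rw [pow_succ]; exact inv_inv_mul_inv_inv_le (pow_ne_zero n hA) hA

theorem inv_pow_le {A : FractionalIdeal D⁰ K} (hA : A ≠ 0) (n : ℕ) : A⁻¹ ^ n ≤ (A ^ n)⁻¹ := by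
  rw [le_inv_iff_mul_le (pow_ne_zero n hA), ← mul_pow, mul_comm]
  exact pow_le_one' (mul_inv_le_one A) n

theorem mul_mem_one_of_mem_inv_inv {J : FractionalIdeal D⁰ K} (hJ : J ≠ 0) {x y : K}
    (hx : x ∈ J⁻¹⁻¹) (hy : y ∈ J⁻¹) : x * y ∈ (1 : FractionalIdeal D⁰ K) :=
  (mem_inv_iff (inv_ne_zero hJ)).mp hx y hy

theorem inv_inv_mono {A B : FractionalIdeal D⁰ K} (hA : A ≠ 0) (hAB : A ≤ B) :
    A⁻¹⁻¹ ≤ B⁻¹⁻¹ := by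
  have hB : B ≠ 0 := ne_bot_of_le_ne_bot hA hAB
  exact inv_anti_mono (inv_ne_zero hB) (inv_ne_zero hA) (inv_anti_mono hA hB hAB)

end FractionalIdeal

section TOperation

open FractionalIdeal

variable {D K}

theorem vSub_le_tSub {J G : FractionalIdeal D⁰ K} (hJ : J ≠ 0) (hfg : (J : Submodule D K).FG)
    (hJG : J ≤ G) : vSub D K J ≤ tSub D K G :=
  le_iSup (fun J : {J : FractionalIdeal D⁰ K // J ≠ 0 ∧ (J : Submodule D K).FG ∧ J ≤ G} =>
    vSub D K J.1) ⟨J, hJ, hfg, hJG⟩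

theorem exists_fg_le_of_mem_tSub {G : FractionalIdeal D⁰ K} {x : K} (hx : x ∈ tSub D K G)
    (hx0 : x ≠ 0) :
    ∃ J : FractionalIdeal D⁰ K, J ≠ 0 ∧ (J : Submodule D K).FG ∧ J ≤ G ∧ x ∈ J⁻¹⁻¹ := by
  have : Nonempty {J : FractionalIdeal D⁰ K // J ≠ 0 ∧ (J : Submodule D K).FG ∧ J ≤ G} := by
    by_contra! hempty
    rw [tSub, iSup_of_empty, Submodule.mem_bot] at hx
    exact hx0 hx
  have hdir : Directed (· ≤ ·)
      (fun J : {J : FractionalIdeal D⁰ K // J ≠ 0 ∧ (J : Submodule D K).FG ∧ J ≤ G} =>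
        vSub D K J.1) := by
    rintro ⟨J₁, hJ₁, hfg₁, hle₁⟩ ⟨J₂, hJ₂, hfg₂, hle₂⟩
    refine ⟨⟨J₁ ⊔ J₂, ne_bot_of_le_ne_bot hJ₁ le_sup_left, ?_, sup_le hle₁ hle₂⟩,
      coe_le_coe.mpr (inv_inv_mono hJ₁ le_sup_left),
      coe_le_coe.mpr (inv_inv_mono hJ₂ le_sup_right)⟩
    rw [coe_sup]; exact hfg₁.sup hfg₂
  obtain ⟨⟨J, hJ, hfg, hle⟩, hxJ⟩ := (Submodule.mem_iSup_of_directed _ hdir).mp hx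
  exact ⟨J, hJ, hfg, hle, mem_coe.mp hxJ⟩

/-- Otherwise `1 ∈ J_v` for some finitely generated `J ≤ G ≤ √I`; then `J^m ≤ I` for some `m`,
and `1 ∈ (J_v)^m ≤ (J^m)_v ≤ I_t = I`. -/
theorem not_le_radical_of_tSub_eq_one {I : Ideal D}
    (hIt : tSub D K (I : FractionalIdeal D⁰ K) = ((I : FractionalIdeal D⁰ K) : Submodule D K))
    (hI : I ≠ ⊤) {G : FractionalIdeal D⁰ K}
    (hG : tSub D K G = ((1 : FractionalIdeal D⁰ K) : Submodule D K)) :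
    ¬ G ≤ (I.radical : FractionalIdeal D⁰ K) := by
  intro hGI
  obtain ⟨J, hJ, hfg, hJG, hJ1⟩ := exists_fg_le_of_mem_tSub (x := (1 : K))
    (by rw [hG]; exact one_mem_one D⁰) one_ne_zero
  obtain ⟨J₀, rfl⟩ := le_one_iff_exists_coeIdeal.mp (hJG.trans (hGI.trans coeIdeal_le_one))
  have hJ₀fg : J₀.FG := (coeIdeal_fg D⁰ (IsFractionRing.injective D K) J₀).mp hfg
  obtain ⟨m, hm⟩ := Ideal.exists_pow_le_of_le_radical_of_fg
    ((coeIdeal_le_coeIdeal K).mp (hJG.trans hGI)) hJ₀fg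
  have hJm : ((J₀ ^ m : Ideal D) : FractionalIdeal D⁰ K) ≠ 0 := by
    rw [coeIdeal_pow]; exact pow_ne_zero m hJ
  have hvI : vSub D K ((J₀ ^ m : Ideal D) : FractionalIdeal D⁰ K) ≤ (I : FractionalIdeal D⁰ K) :=
    hIt ▸ vSub_le_tSub hJm (by rw [coeIdeal_pow, coe_pow]; exact hfg.pow m)
      ((coeIdeal_le_coeIdeal K).mpr hm)
  have h1 : (1 : K) ∈ vSub D K ((J₀ ^ m : Ideal D) : FractionalIdeal D⁰ K) := by
    rw [vSub, mem_coe, coeIdeal_pow, ← one_pow m]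
    exact inv_inv_pow_le hJ m (Submodule.pow_mem_pow _ hJ1 m)
  obtain ⟨c, hc, hc1⟩ := (mem_coeIdeal D⁰).mp (hvI h1)
  rw [← map_one (algebraMap D K), (IsFractionRing.injective D K).eq_iff] at hc1
  exact hI ((Ideal.eq_top_iff_one I).mpr (hc1 ▸ hc))

end TOperation

section DvdAt

variable {R : Type*} [CommRing R]

/-- `DvdAt P x y` says that `x` divides `y` in the localization `R_P`. -/
def DvdAt (P : Ideal R) (x y : R) : Prop :=
  ∃ s ∉ P, ∃ d, y * s = x * d

/-- The contraction to `R` of `⋂ₘ aᵐ R_P`. -/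
def dvdAtAllPowers (P : Ideal R) [hP : P.IsPrime] (a : R) : Ideal R where
  carrier := {z | ∀ m : ℕ, DvdAt P (a ^ m) z}
  zero_mem' m := ⟨1, hP.one_notMem, 0, by ring⟩
  add_mem' {z w} hz hw m := by
    obtain ⟨s, hs, d, hzs⟩ := hz m
    obtain ⟨t, ht, e, hwt⟩ := hw m
    exact ⟨s * t, hP.mul_notMem hs ht, d * t + e * s, by linear_combination t * hzs + s * hwt⟩
  smul_mem' c z hz m := by
    obtain ⟨s, hs, d, hzs⟩ := hz m
    exact ⟨s, hs, c * d, by simp only [smul_eq_mul]; linear_combination c * hzs⟩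

variable {P : Ideal R} [hP : P.IsPrime] {a : R}

theorem dvdAtAllPowers_le (ha : a ∈ P) : dvdAtAllPowers P a ≤ P := by
  intro z hz
  obtain ⟨s, hs, d, hzs⟩ := hz 1
  have hzsP : z * s ∈ P := hzs ▸ P.mul_mem_right d (by rwa [pow_one])
  exact (hP.mem_or_mem hzsP).resolve_right hs

theorem notMem_dvdAtAllPowers [IsDomain R] (ha : a ∈ P) (ha0 : a ≠ 0) :
    a ∉ dvdAtAllPowers P a := by
  intro haQ
  obtain ⟨s, hs, d, hs'⟩ := haQ 2
  have : s = a * d := mul_left_cancel₀ ha0 (by linear_combination hs')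
  exact hs (this ▸ P.mul_mem_right d ha)

/-- If `z, w ∉ ⋂ₘ aᵐ R_P`, then in the valuation ring `R_P` they divide some `aᵏ, aˡ`, and
`zw ∈ a^{k+l+1} R_P` would make `a` a unit of `R_P`. -/
theorem dvdAtAllPowers_isPrime [IsDomain R] (hval : ∀ x y, DvdAt P x y ∨ DvdAt P y x)
    (ha : a ∈ P) (ha0 : a ≠ 0) : (dvdAtAllPowers P a).IsPrime := by
  refine ⟨ne_top_of_le_ne_top hP.ne_top (dvdAtAllPowers_le ha), fun {z w} hzw => ?_⟩
  by_contra! hzw'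
  obtain ⟨hz, hw⟩ := hzw'
  obtain ⟨k, hk⟩ := not_forall.mp hz
  obtain ⟨l, hl⟩ := not_forall.mp hw
  obtain ⟨s, hs, d, hzs⟩ := (hval (a ^ k) z).resolve_left hk
  obtain ⟨t, ht, e, hwt⟩ := (hval (a ^ l) w).resolve_left hl
  obtain ⟨r, hr, f, hzwr⟩ := hzw (k + l + 1)
  have hcancel : s * t * r = a * (f * d * e) := by
    apply mul_left_cancel₀ (pow_ne_zero (k + l) ha0)
    linear_combination (a ^ l * t * r) * hzs + (z * d * r) * hwt + (d * e) * hzwr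
  apply hP.mul_notMem (hP.mul_notMem hs ht) hr
  exact hcancel ▸ P.mul_mem_right _ ha

variable {S : Type*} [CommRing S] [Algebra R S] [FaithfulSMul R S]

theorem mem_dvdAtAllPowers_of_forall_exists {b : S} {u y : R}
    (hu : u ∉ P) (hab : algebraMap R S u = algebraMap R S a * b)
    (hy : ∀ m : ℕ, ∃ d : R, algebraMap R S d = algebraMap R S y * b ^ m) :
    y ∈ dvdAtAllPowers P a := by
  intro m
  obtain ⟨d, hd⟩ := hy m
  refine ⟨u ^ m, fun hum => hu (hP.mem_of_pow_mem m hum), d,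
    FaithfulSMul.algebraMap_injective R S ?_⟩
  simp only [map_mul, map_pow, hab, hd]
  ring

end DvdAt

section PVMD

open FractionalIdeal

variable {D K}

theorem exists_mul_eq_algebraMap_notMem_radical {I : Ideal D}
    (hIt : tSub D K (I : FractionalIdeal D⁰ K) = ((I : FractionalIdeal D⁰ K) : Submodule D K))
    (hI : I ≠ ⊤) {F : Ideal D} (hF : IsTInvertible D K (F : FractionalIdeal D⁰ K)) :
    ∃ a ∈ F, ∃ b ∈ (F : FractionalIdeal D⁰ K)⁻¹, ∃ u ∉ I.radical,
      algebraMap D K u = algebraMap D K a * b := by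
  by_contra! h
  refine not_le_radical_of_tSub_eq_one hIt hI hF (mul_le.mpr fun x hx b hb => ?_)
  obtain ⟨a, ha, rfl⟩ := (mem_coeIdeal D⁰).mp hx
  obtain ⟨u, hu⟩ := (mem_one_iff D⁰).mp (mul_inv_le_one _ (mul_mem_mul hx hb))
  by_cases huI : u ∈ I.radical
  · exact hu ▸ mem_coeIdeal_of_mem D⁰ huI
  · exact absurd hu (h a ha b hb u huI)


/-- In a PVMD, `D_P` is a valuation ring for `P = √I`, `I ≠ D` a `t`-ideal: for `F = (x, y)`
pick `a ∈ F`, `b ∈ F⁻¹` with `ab ∉ P`; since `ab ∈ (xb, yb)`, one of `xb, yb ∈ D` lies outside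
`P`, and `y · xb = x · yb`. -/
theorem dvdAt_or_dvdAt_of_isPVMD (hD : IsPVMD D K) {I : Ideal D}
    (hIt : tSub D K (I : FractionalIdeal D⁰ K) = ((I : FractionalIdeal D⁰ K) : Submodule D K))
    (hI : I ≠ ⊤) (x y : D) : DvdAt I.radical x y ∨ DvdAt I.radical y x := by
  by_cases hx : x = 0
  · refine Or.inr ⟨1, ?_, 0, by rw [hx, zero_mul, mul_zero]⟩
    rwa [← Ideal.eq_top_iff_one, Ideal.radical_eq_top]
  have hxF : x ∈ Ideal.span {x, y} := Ideal.subset_span (by simp)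
  have hyF : y ∈ Ideal.span {x, y} := Ideal.subset_span (by simp)
  have hF := hD (Ideal.span {x, y}) ((Submodule.ne_bot_iff _).mpr ⟨x, hxF, hx⟩)
    (Submodule.fg_span (Set.toFinite _))
  obtain ⟨a, ha, b, hb, u, hu, hab⟩ := exists_mul_eq_algebraMap_notMem_radical hIt hI hF
  obtain ⟨e₁, he₁⟩ := (mem_one_iff D⁰).mp
    (mul_inv_le_one _ (mul_mem_mul (mem_coeIdeal_of_mem D⁰ hxF) hb))
  obtain ⟨e₂, he₂⟩ := (mem_one_iff D⁰).mp
    (mul_inv_le_one _ (mul_mem_mul (mem_coeIdeal_of_mem D⁰ hyF) hb))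
  obtain ⟨r, s, rfl⟩ := Ideal.mem_span_pair.mp ha
  have inj := IsFractionRing.injective D K
  have hu_eq : u = r * e₁ + s * e₂ := inj (by simp only [map_add, map_mul, he₁, he₂, hab]; ring)
  have hcross : y * e₁ = x * e₂ := inj (by simp only [map_mul, he₁, he₂]; ring)
  by_cases he₁ : e₁ ∈ I.radical
  · have he₂ : e₂ ∉ I.radical := fun he₂ =>
      hu (hu_eq ▸ add_mem (Ideal.mul_mem_left _ r he₁) (Ideal.mul_mem_left _ s he₂))
    exact Or.inr ⟨e₂, he₂, e₁, hcross.symm⟩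
  · exact Or.inl ⟨e₁, he₁, e₂, hcross⟩

theorem exists_algebraMap_eq_mul_pow_of_mem_vSub {A : FractionalIdeal D⁰ K} (hA : A ≠ 0) {n : ℕ}
    {z b : K} (hz : z ∈ vSub D K (A ^ n)) (hb : b ∈ A⁻¹) : ∃ d : D, algebraMap D K d = z * b ^ n :=
  (mem_one_iff D⁰).mp <| mul_mem_one_of_mem_inv_inv (pow_ne_zero n hA) (mem_coe.mp hz)
    (inv_pow_le hA n (Submodule.pow_mem_pow _ hb n))

end PVMD

theorem stmt_14 (hD : IsPVMD D K) (I : Ideal D)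
    (hIt : tSub D K (I : FractionalIdeal D⁰ K) = ((I : FractionalIdeal D⁰ K) : Submodule D K))
    (hInv : IsTInvertible D K (I : FractionalIdeal D⁰ K))
    (hrad : I.radical.IsPrime)
    (hht1 : ∀ Q : Ideal D, Q.IsPrime → Q < I.radical → Q = ⊥) :
    (⨅ (n : ℕ) (_ : 1 ≤ n), vSub D K ((I : FractionalIdeal D⁰ K) ^ n)) = ⊥ := by
  have hI : I ≠ ⊤ := fun h => hrad.ne_top (by rw [h, Ideal.radical_top])
  obtain ⟨a, haI, b, hb, u, hu, hab⟩ := exists_mul_eq_algebraMap_notMem_radical hIt hI hInv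
  have hu0 : algebraMap D K u ≠ 0 := by
    rw [ne_eq, IsFractionRing.to_map_eq_zero_iff]; exact fun h => hu (h ▸ zero_mem _)
  have ha0 : a ≠ 0 := by rintro rfl; simp [hab] at hu0
  have hb0 : b ≠ 0 := by rintro rfl; simp [hab] at hu0
  have haP : a ∈ I.radical := Ideal.le_radical haI
  have hQ : dvdAtAllPowers I.radical a = ⊥ :=
    hht1 _ (dvdAtAllPowers_isPrime (dvdAt_or_dvdAt_of_isPVMD hD hIt hI) haP ha0)
      (lt_of_le_of_ne (dvdAtAllPowers_le haP) fun h => notMem_dvdAtAllPowers haP ha0 (h.ge haP))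
  have hI0 : (I : FractionalIdeal D⁰ K) ≠ 0 :=
    FractionalIdeal.coeIdeal_ne_zero.mpr ((Submodule.ne_bot_iff _).mpr ⟨a, haI, ha0⟩)
  refine (Submodule.eq_bot_iff _).mpr fun z hz => ?_
  have hzb : ∀ n, 1 ≤ n → ∃ d : D, algebraMap D K d = z * b ^ n := fun n hn =>
    exists_algebraMap_eq_mul_pow_of_mem_vSub hI0
      ((Submodule.mem_iInf _).mp ((Submodule.mem_iInf _).mp hz n) hn) hb
  obtain ⟨y, hy⟩ := hzb 1 le_rfl
  have hyQ : y ∈ dvdAtAllPowers I.radical a :=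
    mem_dvdAtAllPowers_of_forall_exists hu hab fun m => by
      obtain ⟨d, hd⟩ := hzb (m + 1) (Nat.le_add_left 1 m)
      exact ⟨d, by rw [hd, hy, pow_one, pow_succ']; ring⟩
  rw [hQ, Ideal.mem_bot] at hyQ
  rw [hyQ, map_zero, pow_one, eq_comm, mul_eq_zero] at hy
  exact hy.resolve_right hb0
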